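/- Let 0 < α < 1, let Λ be a (Borel) probability measure on the unit sphere S^{d−1} ⊂ ℝ^d, let s > 0 and k ∈ ℝ^d. Then ∫_{S^{d−1}} ∫₀^∞ (1 − e^{(i⟨k,u⟩ − s) t}) (α/Γ(1−α)) t^{−α−1} dt Λ(du) = ∫_{S^{d−1}} (s − i⟨k,u⟩)^α Λ(du), with all integrals absolutely convergent; i.e., the Fourier–Laplace exponent of the coupled Lévy process (L_α, S_α), whose joint Lévy measure is the image of Λ(du) ⊗ (α/Γ(1−α)) t^{−α−1} dt under (u,t) ↦ (t u, t), equals ψ(k,s) = ∫_{S^{d−1}} (s − i⟨k,u⟩)^α Λ(du). -/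

import Mathlib

/-!
For `Re z > 0`, integrating by parts with `u t = 1 - e^{-zt}` and `v t = -t^{-α}/Γ(1-α)` turns
`∫₀^∞ (1 - e^{-zt}) α/Γ(1-α) t^{-α-1} dt` into `z/Γ(1-α)` times the Laplace transform
`∫₀^∞ t^{-α} e^{-zt} dt`; the boundary terms vanish because `‖1 - e^{-zt}‖ ≤ min 2 (‖z‖ t)`.
That Laplace transform is `Γ(1-α) z^{α-1}`: both sides are holomorphic on the right half-plane
and agree on the positive reals, where this is `Complex.integral_cpow_mul_exp_neg_mul_Ioi`.
With `z = s - i⟨k,u⟩` the inner integral is therefore `z^α`, a continuous, hence integrable,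
function on the compact sphere.
-/

open MeasureTheory Set Filter Topology Complex

lemma norm_cexp_neg_mul_le_of_re_le {z w : ℂ} (h : w.re ≤ z.re) {t : ℝ} (ht : 0 ≤ t) :
    ‖cexp (-z * t)‖ ≤ ‖cexp (-w * t)‖ := by
  simp only [norm_exp, neg_mul, neg_re, re_mul_ofReal, Real.exp_le_exp, neg_le_neg_iff]
  exact mul_le_mul_of_nonneg_right h ht

lemma norm_cexp_neg_mul_le_one {z : ℂ} (hz : 0 ≤ z.re) {t : ℝ} (ht : 0 ≤ t) :
    ‖cexp (-z * t)‖ ≤ 1 := by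
  simpa using norm_cexp_neg_mul_le_of_re_le (w := 0) hz ht

lemma norm_one_sub_cexp_neg_mul_le_two {z : ℂ} (hz : 0 ≤ z.re) {t : ℝ} (ht : 0 ≤ t) :
    ‖1 - cexp (-z * t)‖ ≤ 2 :=
  (norm_sub_le _ _).trans (by rw [norm_one]; linarith [norm_cexp_neg_mul_le_one hz ht])

lemma norm_one_sub_cexp_neg_mul_le {z : ℂ} (hz : 0 ≤ z.re) {t : ℝ} (ht : 0 ≤ t) :
    ‖1 - cexp (-z * t)‖ ≤ ‖z‖ * t := by
  have hderiv : ∀ x ∈ Icc 0 t, HasDerivWithinAt (fun x : ℝ => cexp (-z * x))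
      (cexp (-z * x) * -z) (Icc 0 t) x := fun x _ =>
    ((((hasDerivAt_id (x : ℂ)).const_mul (-z)).cexp).comp_ofReal).hasDerivWithinAt.congr_deriv
      (by simp)
  have hbound : ∀ x ∈ Ico 0 t, ‖cexp (-z * x) * -z‖ ≤ ‖z‖ := fun x hx => by
    simpa [norm_neg] using mul_le_mul_of_nonneg_right (norm_cexp_neg_mul_le_one hz hx.1)
      (norm_nonneg z)
  simpa [norm_sub_rev] using
    norm_image_sub_le_of_norm_deriv_le_segment' hderiv hbound t (right_mem_Icc.2 ht)

lemma norm_mul_ofReal_mul_rpow (w : ℂ) (c p : ℝ) {t : ℝ} (ht : 0 < t) :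
    ‖w * ((c * t ^ p : ℝ) : ℂ)‖ = |c| * (‖w‖ * t ^ p) := by
  rw [norm_mul, norm_real, Real.norm_eq_abs, abs_mul, abs_of_pos (Real.rpow_pos_of_pos ht p)]
  ring

lemma integrableOn_one_sub_cexp_neg_mul_mul_rpow {α : ℝ} (hα0 : 0 < α) (hα1 : α < 1) {z : ℂ}
    (hz : 0 ≤ z.re) (c : ℝ) :
    IntegrableOn (fun t : ℝ => (1 - cexp (-z * t)) * ((c * t ^ (-α - 1) : ℝ) : ℂ)) (Ioi 0) := by
  have hmeas : AEStronglyMeasurable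
      (fun t : ℝ => (1 - cexp (-z * t)) * ((c * t ^ (-α - 1) : ℝ) : ℂ)) volume := by
    fun_prop
  rw [← Ioc_union_Ioi_eq_Ioi zero_le_one]
  refine IntegrableOn.union ?_ ?_
  · have hint : IntegrableOn (fun t : ℝ => |c| * (‖z‖ * t ^ (-α))) (Ioc 0 1) :=
      (((intervalIntegral.intervalIntegrable_rpow' (by linarith)).1).const_mul _).const_mul _
    refine hint.mono' hmeas.restrict ((ae_restrict_iff' measurableSet_Ioc).2 ?_)
    filter_upwards with t ⟨ht, _⟩
    rw [norm_mul_ofReal_mul_rpow _ c _ ht, Real.rpow_sub_one ht.ne']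
    refine mul_le_mul_of_nonneg_left ?_ (abs_nonneg c)
    calc ‖1 - cexp (-z * t)‖ * (t ^ (-α) / t) ≤ ‖z‖ * t * (t ^ (-α) / t) := by
          gcongr; exact norm_one_sub_cexp_neg_mul_le hz ht.le
      _ = ‖z‖ * t ^ (-α) := by field_simp
  · have hint : IntegrableOn (fun t : ℝ => |c| * (2 * t ^ (-α - 1))) (Ioi 1) :=
      ((integrableOn_Ioi_rpow_of_lt (by linarith) one_pos).const_mul 2).const_mul _
    refine hint.mono' hmeas.restrict ((ae_restrict_iff' measurableSet_Ioi).2 ?_)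
    filter_upwards with t (ht : 1 < t)
    rw [norm_mul_ofReal_mul_rpow _ c _ (one_pos.trans ht)]
    gcongr
    exact norm_one_sub_cexp_neg_mul_le_two hz (by linarith)

lemma tendsto_one_sub_cexp_neg_mul_mul_rpow_nhdsGT_zero {α : ℝ} (hα1 : α < 1) {z : ℂ}
    (hz : 0 ≤ z.re) (c : ℝ) :
    Tendsto (fun t : ℝ => (1 - cexp (-z * t)) * ((c * t ^ (-α) : ℝ) : ℂ)) (𝓝[>] 0) (𝓝 0) := by
  have hlim : Tendsto (fun t : ℝ => |c| * (‖z‖ * t ^ (1 - α))) (𝓝[>] 0) (𝓝 0) := by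
    simpa [Real.zero_rpow (sub_pos.2 hα1).ne'] using
      (((Real.continuousAt_rpow_const 0 (1 - α) (Or.inr (sub_pos.2 hα1).le)).tendsto.mono_left
        nhdsWithin_le_nhds).const_mul ‖z‖).const_mul |c|
  refine squeeze_zero_norm' ?_ hlim
  filter_upwards [self_mem_nhdsWithin] with t (ht : 0 < t)
  rw [norm_mul_ofReal_mul_rpow _ c _ ht]
  refine mul_le_mul_of_nonneg_left ?_ (abs_nonneg c)
  calc ‖1 - cexp (-z * t)‖ * t ^ (-α) ≤ ‖z‖ * t * t ^ (-α) := by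
        gcongr; exact norm_one_sub_cexp_neg_mul_le hz ht.le
    _ = ‖z‖ * t ^ (1 - α) := by
        rw [mul_assoc, ← Real.rpow_one_add' ht.le (by linarith), sub_eq_add_neg]

lemma tendsto_one_sub_cexp_neg_mul_mul_rpow_atTop {α : ℝ} (hα0 : 0 < α) {z : ℂ}
    (hz : 0 ≤ z.re) (c : ℝ) :
    Tendsto (fun t : ℝ => (1 - cexp (-z * t)) * ((c * t ^ (-α) : ℝ) : ℂ)) atTop (𝓝 0) := by
  have hlim : Tendsto (fun t : ℝ => |c| * (2 * t ^ (-α))) atTop (𝓝 0) := by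
    simpa using ((tendsto_rpow_neg_atTop hα0).const_mul 2).const_mul |c|
  refine squeeze_zero_norm' ?_ hlim
  filter_upwards [eventually_gt_atTop 0] with t ht
  rw [norm_mul_ofReal_mul_rpow _ c _ ht]
  gcongr
  exact norm_one_sub_cexp_neg_mul_le_two hz ht.le

lemma integrableOn_cpow_mul_cexp_neg_mul {a z : ℂ} (ha : 0 < a.re) (hz : 0 < z.re) :
    IntegrableOn (fun t : ℝ => (t : ℂ) ^ (a - 1) * cexp (-z * t)) (Ioi 0) := by
  have hint := integrableOn_rpow_mul_exp_neg_mul_rpow (s := a.re - 1) (p := 1) (by linarith)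
    one_pos hz
  refine hint.mono' ?_ ((ae_restrict_iff' measurableSet_Ioi).2 ?_)
  · exact (ContinuousOn.mul (fun t ht => (continuousAt_ofReal_cpow_const _ _
      (Or.inr (ne_of_gt ht))).continuousWithinAt) (by fun_prop)).aestronglyMeasurable
      measurableSet_Ioi
  · filter_upwards with t (ht : 0 < t)
    rw [norm_mul, norm_cpow_eq_rpow_re_of_pos ht, norm_exp, Real.rpow_one]
    simp

lemma differentiableOn_integral_cpow_mul_cexp_neg_mul {a : ℂ} (ha : 0 < a.re) :
    DifferentiableOn ℂ (fun z : ℂ => ∫ t in Ioi (0 : ℝ), (t : ℂ) ^ (a - 1) * cexp (-z * t))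
      {z | 0 < z.re} := by
  intro z₀ (hz₀ : 0 < z₀.re)
  set w : ℂ := ((z₀.re / 2 : ℝ) : ℂ)
  have hw : 0 < w.re := by simpa [w] using hz₀
  have hball : ∀ z ∈ Metric.ball z₀ (z₀.re / 2), w.re ≤ z.re := fun z hz => by
    have := (abs_re_le_norm (z - z₀)).trans_lt (mem_ball_iff_norm.1 hz)
    rw [sub_re, abs_lt] at this
    simp only [w, ofReal_re]
    linarith [this.1]
  have ha1 : 0 < (a + 1).re := by simp; linarith
  have hderiv : ∀ t ∈ Ioi (0 : ℝ), ∀ z : ℂ, HasDerivAt (fun z => (t : ℂ) ^ (a - 1) * cexp (-z * t))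
      (-((t : ℂ) ^ (a + 1 - 1) * cexp (-z * t))) z := fun t (ht : 0 < t) z => by
    have ht' : (t : ℂ) ≠ 0 := ofReal_ne_zero.2 ht.ne'
    have hcpow : (t : ℂ) ^ (a + 1 - 1) = (t : ℂ) ^ (a - 1) * t := by
      rw [add_sub_cancel_right, cpow_sub _ _ ht', cpow_one, div_mul_cancel₀ _ ht']
    refine (((hasDerivAt_neg z).mul_const (t : ℂ)).cexp.const_mul _).congr_deriv ?_
    rw [hcpow]
    ring
  have key := hasDerivAt_integral_of_dominated_loc_of_deriv_le (μ := volume.restrict (Ioi 0))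
    (F := fun z (t : ℝ) => (t : ℂ) ^ (a - 1) * cexp (-z * t))
    (F' := fun z (t : ℝ) => -((t : ℂ) ^ (a + 1 - 1) * cexp (-z * t)))
    (bound := fun t : ℝ => ‖(t : ℂ) ^ (a + 1 - 1) * cexp (-w * t)‖)
    (Metric.ball_mem_nhds z₀ (half_pos hz₀))
    (eventually_of_mem ((isOpen_lt continuous_const continuous_re).mem_nhds hz₀) fun z hz =>
      (integrableOn_cpow_mul_cexp_neg_mul ha hz).aestronglyMeasurable)
    (integrableOn_cpow_mul_cexp_neg_mul ha hz₀)
    (integrableOn_cpow_mul_cexp_neg_mul ha1 hz₀).neg.aestronglyMeasurable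
    ((ae_restrict_iff' measurableSet_Ioi).2 (Eventually.of_forall fun t (ht : 0 < t) z hz => by
      rw [norm_neg, norm_mul, norm_mul]
      exact mul_le_mul_of_nonneg_left (norm_cexp_neg_mul_le_of_re_le (hball z hz) ht.le)
        (norm_nonneg _)))
    (integrableOn_cpow_mul_cexp_neg_mul ha1 hw).norm
    ((ae_restrict_iff' measurableSet_Ioi).2 (Eventually.of_forall fun t ht z _ => hderiv t ht z))
  exact key.2.differentiableAt.differentiableWithinAt

lemma frequently_nhdsNE_one_of_forall_ofReal_pos {p : ℂ → Prop} (h : ∀ r : ℝ, 0 < r → p r) :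
    ∃ᶠ z in 𝓝[≠] (1 : ℂ), p z := by
  have hlim : Tendsto ofReal (𝓝[≠] (1 : ℝ)) (𝓝[≠] (1 : ℂ)) := by
    simpa using continuous_ofReal.continuousWithinAt.tendsto_nhdsWithin (x := (1 : ℝ))
      (t := {(1 : ℂ)}ᶜ) fun _ _ ↦ by simp_all
  refine hlim.frequently (Eventually.frequently ?_)
  filter_upwards [nhdsWithin_le_nhds (lt_mem_nhds one_pos)] with r hr using h r hr

theorem integral_cpow_mul_cexp_neg_mul_Ioi_of_re_pos {a z : ℂ} (ha : 0 < a.re) (hz : 0 < z.re) :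
    ∫ t in Ioi (0 : ℝ), (t : ℂ) ^ (a - 1) * cexp (-z * t) = (1 / z) ^ a * Gamma a := by
  have hopen : IsOpen {z : ℂ | 0 < z.re} := isOpen_lt continuous_const continuous_re
  have hG : DifferentiableOn ℂ (fun z : ℂ => (1 / z) ^ a * Gamma a) {z | 0 < z.re} :=
    fun z (hz : 0 < z.re) => by
    have hz0 : z ≠ 0 := fun h => by simp [h] at hz
    have hslit : 1 / z ∈ slitPlane := mem_slitPlane_iff.2 <| Or.inl <| by
      rw [one_div, inv_re]
      exact div_pos hz (normSq_pos.2 hz0)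
    exact ((((differentiableAt_const 1).div differentiableAt_id hz0).cpow_const hslit).mul_const
      _).differentiableWithinAt
  refine ((differentiableOn_integral_cpow_mul_cexp_neg_mul ha).analyticOnNhd hopen
    |>.eqOn_of_preconnected_of_frequently_eq (hG.analyticOnNhd hopen)
    (convex_halfSpace_re_gt 0).isPreconnected (z₀ := 1) (by simp) ?_) hz
  refine frequently_nhdsNE_one_of_forall_ofReal_pos fun r hr => ?_
  simpa [neg_mul] using integral_cpow_mul_exp_neg_mul_Ioi ha hr

theorem integral_one_sub_cexp_neg_mul_mul_rpow_eq_cpow {α : ℝ} (hα0 : 0 < α)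
    (hα1 : α < 1) {z : ℂ} (hz : 0 < z.re) :
    ∫ t in Ioi (0 : ℝ), (1 - cexp (-z * t)) * ((α / Real.Gamma (1 - α) * t ^ (-α - 1) : ℝ) : ℂ)
      = z ^ (α : ℂ) := by
  set Γ := Real.Gamma (1 - α)
  have hΓ : (Γ : ℂ) ≠ 0 := ofReal_ne_zero.2 (Real.Gamma_pos_of_pos (by linarith)).ne'
  have hz0 : z ≠ 0 := fun h => by simp [h] at hz
  have hu : ∀ t ∈ Ioi (0 : ℝ), HasDerivAt (fun t : ℝ => 1 - cexp (-z * t)) (z * cexp (-z * t)) t :=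
    fun t _ => ((((hasDerivAt_id (t : ℂ)).const_mul (-z)).cexp).comp_ofReal.const_sub 1).congr_deriv
      (by simp; ring)
  have hv : ∀ t ∈ Ioi (0 : ℝ), HasDerivAt (fun t : ℝ => -((Γ⁻¹ * t ^ (-α) : ℝ) : ℂ))
      ((α / Γ * t ^ (-α - 1) : ℝ) : ℂ) t := fun t (ht : 0 < t) =>
    (((Real.hasDerivAt_rpow_const (Or.inl ht.ne')).const_mul Γ⁻¹).ofReal_comp.neg).congr_deriv
      (by push_cast; ring)
  have hu'v : ∀ t ∈ Ioi (0 : ℝ), z * cexp (-z * t) * -((Γ⁻¹ * t ^ (-α) : ℝ) : ℂ)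
      = -(z / Γ) * ((t : ℂ) ^ ((1 - α : ℂ) - 1) * cexp (-z * t)) := fun t (ht : 0 < t) => by
    rw [sub_sub_cancel_left, ofReal_mul, ofReal_cpow ht.le, ofReal_neg]
    push_cast
    ring
  have hre : 0 < (1 - α : ℂ).re := by simpa using hα1
  have hibp := integral_Ioi_mul_deriv_eq_deriv_mul hu hv
    (integrableOn_one_sub_cexp_neg_mul_mul_rpow hα0 hα1 hz.le (α / Γ))
    (IntegrableOn.congr_fun ((integrableOn_cpow_mul_cexp_neg_mul hre hz).const_mul _)
      (fun t ht => (hu'v t ht).symm) measurableSet_Ioi)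
    ((tendsto_one_sub_cexp_neg_mul_mul_rpow_nhdsGT_zero hα1 hz.le Γ⁻¹).neg.congr
      fun t => (mul_neg _ _).symm)
    ((tendsto_one_sub_cexp_neg_mul_mul_rpow_atTop hα0 hz.le Γ⁻¹).neg.congr
      fun t => (mul_neg _ _).symm)
  rw [hibp, setIntegral_congr_fun measurableSet_Ioi hu'v, integral_const_mul,
    integral_cpow_mul_cexp_neg_mul_Ioi_of_re_pos hre hz]
  have harg : z.arg ≠ Real.pi := (mem_slitPlane_iff_arg.1 (mem_slitPlane_iff.2 (Or.inl hz))).1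
  rw [← ofReal_one, ← ofReal_sub, Gamma_ofReal, ofReal_sub, ofReal_one, one_div, inv_cpow _ _ harg,
    cpow_sub _ _ hz0, cpow_one]
  field_simp
  ring

/-- For `0 < α < 1`, a probability measure `Λ` on the unit sphere
`S^{d−1} ⊂ ℝ^d`, `s > 0` and `k ∈ ℝ^d`, the Fourier–Laplace exponent of the coupled
Lévy process `(L_α, S_α)` equals `ψ(k,s) = ∫_{S^{d−1}} (s − i⟨k,u⟩)^α Λ(du)`:
`∫_{S^{d−1}} ∫₀^∞ (1 − e^{(i⟨k,u⟩ − s)t}) (α/Γ(1−α)) t^(−α−1) dt Λ(du)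
  = ∫_{S^{d−1}} (s − i⟨k,u⟩)^α Λ(du)`, with all integrals absolutely convergent. -/
theorem material_derivative_symbol (d : ℕ) (α : ℝ) (hα0 : 0 < α) (hα1 : α < 1)
    (Λ : Measure (Metric.sphere (0 : EuclideanSpace ℝ (Fin d)) 1))
    [IsProbabilityMeasure Λ]
    (s : ℝ) (hs : 0 < s) (k : EuclideanSpace ℝ (Fin d)) :
    (∀ u : Metric.sphere (0 : EuclideanSpace ℝ (Fin d)) 1,
      IntegrableOn
        (fun t : ℝ => (1 - Complex.exp ((Complex.I * ((inner ℝ k (u : EuclideanSpace ℝ (Fin d)) : ℝ) : ℂ) - (s : ℂ)) * t)) *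
          ((α / Real.Gamma (1 - α) * t ^ (-α - 1) : ℝ) : ℂ))
        (Ioi (0:ℝ))) ∧
    Integrable (fun u : Metric.sphere (0 : EuclideanSpace ℝ (Fin d)) 1 =>
      ∫ t in Ioi (0:ℝ),
        (1 - Complex.exp ((Complex.I * ((inner ℝ k (u : EuclideanSpace ℝ (Fin d)) : ℝ) : ℂ) - (s : ℂ)) * t)) *
          ((α / Real.Gamma (1 - α) * t ^ (-α - 1) : ℝ) : ℂ)) Λ ∧
    Integrable (fun u : Metric.sphere (0 : EuclideanSpace ℝ (Fin d)) 1 =>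
      ((s : ℂ) - Complex.I * ((inner ℝ k (u : EuclideanSpace ℝ (Fin d)) : ℝ) : ℂ)) ^ (α : ℂ)) Λ ∧
    (∫ u : Metric.sphere (0 : EuclideanSpace ℝ (Fin d)) 1,
        (∫ t in Ioi (0:ℝ),
          (1 - Complex.exp ((Complex.I * ((inner ℝ k (u : EuclideanSpace ℝ (Fin d)) : ℝ) : ℂ) - (s : ℂ)) * t)) *
            ((α / Real.Gamma (1 - α) * t ^ (-α - 1) : ℝ) : ℂ)) ∂Λ)
      = ∫ u : Metric.sphere (0 : EuclideanSpace ℝ (Fin d)) 1,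
          ((s : ℂ) - Complex.I * ((inner ℝ k (u : EuclideanSpace ℝ (Fin d)) : ℝ) : ℂ)) ^ (α : ℂ) ∂Λ := by
  set z : Metric.sphere (0 : EuclideanSpace ℝ (Fin d)) 1 → ℂ :=
    fun u => s - I * ((inner ℝ k (u : EuclideanSpace ℝ (Fin d)) : ℝ) : ℂ)
  have hz : ∀ u, 0 < (z u).re := fun u => by simp [z, hs]
  have hψ : ∀ u, ∫ t in Ioi (0 : ℝ), (1 - cexp (-z u * t)) *
      ((α / Real.Gamma (1 - α) * t ^ (-α - 1) : ℝ) : ℂ) = z u ^ (α : ℂ) := fun u =>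
    integral_one_sub_cexp_neg_mul_mul_rpow_eq_cpow hα0 hα1 (hz u)
  have hcont : Continuous fun u => z u ^ (α : ℂ) :=
    (by fun_prop : Continuous z).cpow continuous_const fun u => mem_slitPlane_iff.2 (Or.inl (hz u))
  have hint : Integrable (fun u => z u ^ (α : ℂ)) Λ :=
    hcont.integrable_of_hasCompactSupport (.of_compactSpace _)
  simp only [z, neg_sub] at hψ hint
  refine ⟨fun u => ?_, hint.congr (.of_forall fun u => (hψ u).symm), hint,
    integral_congr_ae (.of_forall hψ)⟩
  simpa only [z, neg_sub] using integrableOn_one_sub_cexp_neg_mul_mul_rpow hα0 hα1 (hz u).le _
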